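/- arXiv:1504.02989 — 3 statements merged into one kernel-verified Lean document; each statement's English description precedes it below -/
import Mathlib

section
/- Let n ≥ 2 and m = (m_1,…,m_n) ∈ ℝ^n with m_0 := 1, and suppose (m_1,…,m_{n−1}) is I-realizable on ℕ₀. Then there exists a polynomial P* ∈ 𝒫_n with L_{P*}(m) ≤ L_P(m) for all P ∈ 𝒫_n, and (m_1,…,m_n) is realizable on ℕ₀ if and only if L_{P*}(m) ≥ 0; moreover (m_1,…,m_n) is I-realizable if L_{P*}(m) > 0 and B-realizable if L_{P*}(m) = 0. -/
/-!
The polynomials of `𝒫_n` are the nodal polynomials `∏_{a ∈ S} (X - a)` of the admissible sets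
`S ⊆ ℕ`, those in which every non-member has an even number of members above it. Let `μ`
realize `m_0, …, m_{n-1}`. Either the support of `μ` lies in one admissible `n`-set, which then
minimizes `S ↦ L(nodal S)`, or every admissible `n`-set misses one of finitely many atoms of
`μ`, and then `L(nodal S)` grows quadratically in `max S`. Either way a minimizer `s` exists;
take one with least root sum.

Moving a root `a` of `s` to the nearest free point `y` on the side that keeps `s` admissible
changes `L(nodal s)` by `(a - y) L(nodal (s \ a))`. So `L(nodal (s \ a))` has the sign of the
Lagrange weight of `s` at `a`, strictly when this weight is positive (by I-realizability of
`m_0, …, m_{n-1}` or by the least root sum). Hence the Lagrange quadrature on `s` has nonnegative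
weights; it reproduces `m_k` for `k < n` and `m_n - L(nodal s)`. When `L(nodal s) ≥ 0`, an atom
of mass `L(nodal s) / (nodal s)(t)` at a far point `t`, compensated on `s` by the interpolation
at `t`, gives a nonnegative measure with moments `m_0, …, m_n`.
-/

open Polynomial

/-- `Lf P m = Σ_k p_k m_k`, the affine form associated to a polynomial `P`. -/
noncomputable def Lf (P : Polynomial ℝ) (m : ℕ → ℝ) : ℝ := P.sum fun k a => a * m k

/-- `𝒫_j`: monic real polynomials of degree `j` with `j` distinct roots in `ℕ₀`,
nonnegative on `ℕ₀`. -/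
def PolyP (j : ℕ) (P : Polynomial ℝ) : Prop :=
  P.Monic ∧ P.natDegree = j ∧
    (∃ S : Finset ℕ, S.card = j ∧ P = ∏ a ∈ S, (X - C (a : ℝ))) ∧
    ∀ x : ℕ, 0 ≤ P.eval (x : ℝ)

/-- `(m_1,…,m_j)` (with `m 0 = 1`) is realizable on `ℕ₀`: there is a probability
measure on the nonnegative integers whose `k`-th moment is `m k` for `k ≤ j`. -/
def RealizableN0 (j : ℕ) (m : ℕ → ℝ) : Prop :=
  ∃ μ : ℕ → ℝ, (∀ x, 0 ≤ μ x) ∧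
    ∀ k, k ≤ j → HasSum (fun x : ℕ => (x : ℝ) ^ k * μ x) (m k)

/-- I-realizability on `ℕ₀`. -/
def IRealizable (j : ℕ) (m : ℕ → ℝ) : Prop :=
  RealizableN0 j m ∧ ∀ P : Polynomial ℝ, PolyP j P ∨ PolyP (j - 1) P → 0 < Lf P m

/-- B-realizability on `ℕ₀`. -/
def BRealizable (j : ℕ) (m : ℕ → ℝ) : Prop :=
  RealizableN0 j m ∧ ∃ P : Polynomial ℝ, (PolyP j P ∨ PolyP (j - 1) P) ∧ Lf P m = 0


open Finset Lagrange Filter Topology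

section MomentFunctional

variable {j : ℕ} {m μ : ℕ → ℝ}

lemma Lf_eq_lsum (P : ℝ[X]) (m : ℕ → ℝ) :
    Lf P m = lsum (fun k => LinearMap.mulRight ℝ (m k)) P := rfl

@[simp] lemma Lf_add (P Q : ℝ[X]) (m : ℕ → ℝ) : Lf (P + Q) m = Lf P m + Lf Q m := by
  simp only [Lf_eq_lsum, map_add]

@[simp] lemma Lf_sub (P Q : ℝ[X]) (m : ℕ → ℝ) : Lf (P - Q) m = Lf P m - Lf Q m := by
  simp only [Lf_eq_lsum, map_sub]

@[simp] lemma Lf_C_mul (c : ℝ) (P : ℝ[X]) (m : ℕ → ℝ) : Lf (C c * P) m = c * Lf P m := by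
  simp only [Lf_eq_lsum, ← smul_eq_C_mul, map_smul, smul_eq_mul]

@[simp] lemma Lf_sum {ι : Type*} (s : Finset ι) (P : ι → ℝ[X]) (m : ℕ → ℝ) :
    Lf (∑ i ∈ s, P i) m = ∑ i ∈ s, Lf (P i) m := by
  simp only [Lf_eq_lsum, map_sum]

@[simp] lemma Lf_X_pow (k : ℕ) (m : ℕ → ℝ) : Lf (X ^ k) m = m k := by
  simp [Lf_eq_lsum, ← monomial_one_right_eq_X_pow]

def HasMoments (j : ℕ) (μ m : ℕ → ℝ) : Prop :=
  ∀ k ≤ j, HasSum (fun x : ℕ => (x : ℝ) ^ k * μ x) (m k)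

lemma HasMoments.hasSum_eval (hμ : HasMoments j μ m) {P : ℝ[X]} (hP : P.natDegree ≤ j) :
    HasSum (fun x : ℕ => P.eval (x : ℝ) * μ x) (Lf P m) := by
  have hlt : P.natDegree < j + 1 := Nat.lt_succ_of_le hP
  have hexpand : (fun x : ℕ => P.eval (x : ℝ) * μ x) =
      fun x : ℕ => ∑ k ∈ range (j + 1), P.coeff k * ((x : ℝ) ^ k * μ x) := by
    funext x
    rw [eval_eq_sum_range' hlt, sum_mul]
    exact sum_congr rfl fun k _ => by ring
  rw [hexpand, Lf, sum_over_range' P (by simp) _ hlt]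
  exact hasSum_sum fun k hk => (hμ k (Nat.lt_succ_iff.mp (mem_range.mp hk))).mul_left _

lemma HasMoments.Lf_nonneg (hμ0 : ∀ x, 0 ≤ μ x) (hμ : HasMoments j μ m) {P : ℝ[X]}
    (hP : P.natDegree ≤ j) (hPnn : ∀ x : ℕ, 0 ≤ P.eval (x : ℝ)) : 0 ≤ Lf P m :=
  (hμ.hasSum_eval hP).nonneg fun x => mul_nonneg (hPnn x) (hμ0 x)

lemma realizableN0_of_finset (U : Finset ℕ) (ν : ℕ → ℝ) (hν : ∀ x ∈ U, 0 ≤ ν x)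
    (hm : ∀ k ≤ j, ∑ x ∈ U, (x : ℝ) ^ k * ν x = m k) : RealizableN0 j m := by
  classical
  refine ⟨fun x => if x ∈ U then ν x else 0, fun x => ?_, fun k hk => ?_⟩
  · dsimp only
    split_ifs with hx
    exacts [hν x hx, le_rfl]
  · have hsum : HasSum (fun x : ℕ => (x : ℝ) ^ k * if x ∈ U then ν x else 0)
        (∑ x ∈ U, (x : ℝ) ^ k * if x ∈ U then ν x else 0) :=
      hasSum_sum_of_ne_finset_zero fun x hx => by simp [hx]
    rwa [sum_congr rfl fun x hx => by rw [if_pos hx], hm k hk] at hsum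

end MomentFunctional

section Admissible

variable {S T : Finset ℕ} {a b x y : ℕ}

def countAbove (S : Finset ℕ) (x : ℕ) : ℕ := #{a ∈ S | x < a}

def Admissible (S : Finset ℕ) : Prop := ∀ x ∉ S, Even (countAbove S x)

lemma eval_nodal_eq_neg_one_pow_mul (S : Finset ℕ) (x : ℕ) :
    (nodal S (↑)).eval (x : ℝ) = (-1) ^ countAbove S x * ∏ a ∈ S, |(x : ℝ) - a| := by
  have hsign : ∀ a ∈ S, (x : ℝ) - a = (if x < a then -1 else 1) * |(x : ℝ) - a| := by
    intro a _
    split_ifs with h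
    · rw [abs_of_neg (by simpa using h)]; ring
    · rw [abs_of_nonneg (by simpa using h)]; ring
  rw [eval_nodal, prod_congr rfl hsign, prod_mul_distrib, prod_ite, prod_const, prod_const_one,
    mul_one, countAbove]

lemma eval_nodal_pos_iff (hx : x ∉ S) :
    0 < (nodal S (↑)).eval (x : ℝ) ↔ Even (countAbove S x) := by
  have hprod : 0 < ∏ a ∈ S, |(x : ℝ) - a| :=
    prod_pos fun a ha => abs_pos.mpr (sub_ne_zero.mpr fun h => hx (Nat.cast_injective h ▸ ha))
  rw [eval_nodal_eq_neg_one_pow_mul]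
  rcases Nat.even_or_odd (countAbove S x) with h | h
  · simp [h.neg_one_pow, hprod, h]
  · simp [h.neg_one_pow, hprod.le, Nat.not_even_iff_odd.mpr h]

lemma admissible_iff_eval_nonneg :
    Admissible S ↔ ∀ x : ℕ, 0 ≤ (nodal S (↑)).eval (x : ℝ) := by
  refine ⟨fun hS x => ?_, fun h x hx => (eval_nodal_pos_iff hx).mp ?_⟩
  · by_cases hx : x ∈ S
    · rw [eval_nodal_at_node (v := ((↑) : ℕ → ℝ)) hx]
    · exact ((eval_nodal_pos_iff hx).mpr (hS x hx)).le
  · exact (h x).lt_of_ne' (eval_nodal_not_at_node fun a ha h => hx (Nat.cast_injective h ▸ ha))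


lemma countAbove_insert (hy : y ∉ S) (x : ℕ) :
    countAbove (insert y S) x = countAbove S x + if x < y then 1 else 0 := by
  unfold countAbove
  rw [filter_insert]
  split_ifs with h
  · rw [card_insert_of_notMem fun h' => hy (mem_filter.mp h').1]
  · rfl

lemma countAbove_erase_add (ha : a ∈ S) (x : ℕ) :
    countAbove (S.erase a) x + (if x < a then 1 else 0) = countAbove S x := by
  rw [← countAbove_insert (notMem_erase a S), insert_erase ha]

lemma admissible_range (k : ℕ) : Admissible (range k) := by
  intro x hx
  rw [mem_range, not_lt] at hx
  rw [countAbove, filter_false_of_mem fun a ha => by rw [mem_range] at ha; omega, card_empty]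
  exact Even.zero

lemma Admissible.insert_erase (hS : Admissible S) (ha : a ∈ S) (hy : y ∉ S)
    (hbetween : ∀ z, a < z ∧ z < y ∨ y < z ∧ z < a → z ∈ S)
    (hpar : Even (countAbove S a + if a < y then 1 else 0)) :
    Admissible (insert y (S.erase a)) := by
  intro x hx
  rw [mem_insert, mem_erase, not_or, not_and_or, not_not] at hx
  rw [countAbove_insert fun h => hy (mem_of_mem_erase h)]
  have hcount := countAbove_erase_add ha x
  obtain ⟨hxy, rfl | hxS⟩ := hx
  · simpa [← hcount] using hpar
  · have hxa : x ≠ a := fun h => hxS (h ▸ ha)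
    have hsame : x < y ↔ x < a := by
      constructor <;> intro h <;> by_contra h' <;> exact hxS (hbetween x (by omega))
    have := hS x hxS
    rw [Nat.even_iff] at this ⊢
    split_ifs at hcount ⊢ <;> omega

lemma Admissible.erase (hS : Admissible S) (ha : a ∈ S) (heven : Even (countAbove S a))
    (hbelow : ∀ z < a, z ∈ S) : Admissible (S.erase a) := by
  intro x hx
  have hcount := countAbove_erase_add ha x
  rw [mem_erase, not_and_or, not_not] at hx
  obtain rfl | hxS := hx
  · simpa [← hcount] using heven
  · have hax : a < x := by
      by_contra h
      exact hxS (if hxa : x = a then hxa ▸ ha else hbelow x (by omega))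
    simpa [← hcount, not_lt.mpr hax.le] using hS x hxS

lemma Admissible.union_Ico (hT : Admissible T) {M : ℕ} (hM : ∀ a ∈ T, a < M) (r : ℕ) :
    Admissible (T ∪ Ico M (M + 2 * r)) := by
  intro x hx
  rw [mem_union, not_or, mem_Ico, not_and_or, not_le, not_lt] at hx
  obtain ⟨hxT, hxM⟩ := hx
  have hdisj : Disjoint T (Ico M (M + 2 * r)) :=
    disjoint_left.mpr fun a ha ha' => (hM a ha).not_ge (mem_Ico.mp ha').1
  rw [countAbove, filter_union, card_union_of_disjoint (disjoint_filter_filter hdisj)]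
  rcases hxM with hxM | hxM
  · rw [filter_true_of_mem fun a ha => hxM.trans_le (mem_Ico.mp ha).1, Nat.card_Ico,
      Nat.add_sub_cancel_left]
    exact (hT x hxT).add (even_two_mul r)
  · have h1 : {a ∈ T | x < a} = ∅ :=
      filter_eq_empty_iff.mpr fun a ha => by have := hM a ha; omega
    have h2 : {a ∈ Ico M (M + 2 * r) | x < a} = ∅ :=
      filter_eq_empty_iff.mpr fun a ha => by have := mem_Ico.mp ha; omega
    simp [h1, h2]

lemma Admissible.pred_mem (hS : Admissible S) (hb : b ∈ S) (hmax : ∀ a ∈ S, a ≤ b)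
    (hb0 : 0 < b) : b - 1 ∈ S := by
  by_contra h
  have hone : countAbove S (b - 1) = 1 := by
    rw [countAbove, card_eq_one]
    refine ⟨b, eq_singleton_iff_unique_mem.mpr ⟨mem_filter.mpr ⟨hb, by omega⟩, ?_⟩⟩
    intro a ha
    have := hmax a (mem_filter.mp ha).1
    have := (mem_filter.mp ha).2
    omega
  exact Nat.not_even_one (hone ▸ hS _ h)

lemma polyP_nodal (hS : Admissible S) : PolyP #S (nodal S (↑)) :=
  ⟨nodal_monic, natDegree_nodal, ⟨S, rfl, nodal_eq S _⟩, admissible_iff_eval_nonneg.mp hS⟩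

lemma PolyP.exists_eq_nodal {j : ℕ} {P : ℝ[X]} (h : PolyP j P) :
    ∃ S : Finset ℕ, #S = j ∧ Admissible S ∧ P = nodal S (↑) := by
  obtain ⟨-, -, ⟨S, hS, rfl⟩, hnn⟩ := h
  exact ⟨S, hS, admissible_iff_eval_nonneg.mpr hnn, (nodal_eq S _).symm⟩

end Admissible

section Positivity

variable {j : ℕ} {m μ : ℕ → ℝ}

theorem Lf_nodal_pos (hμ0 : ∀ x, 0 ≤ μ x) (hμ : HasMoments j μ m)
    (hpos : ∀ P, PolyP j P ∨ PolyP (j - 1) P → 0 < Lf P m) {T : Finset ℕ}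
    (hT : Admissible T) (hTj : #T ≤ j) : 0 < Lf (nodal T (↑)) m := by
  have hsum := hμ.hasSum_eval (P := nodal T (↑)) (natDegree_nodal.trans_le hTj)
  have hnn : ∀ x : ℕ, 0 ≤ (nodal T (↑)).eval (x : ℝ) * μ x := fun x =>
    mul_nonneg (admissible_iff_eval_nonneg.mp hT x) (hμ0 x)
  refine (hsum.nonneg hnn).lt_of_ne fun h0 => ?_
  have hterms := (hasSum_zero_iff_of_nonneg hnn).mp (h0 ▸ hsum)
  have hsupp : ∀ x ∉ T, μ x = 0 := fun x hx =>
    (mul_eq_zero.mp (congrFun hterms x)).resolve_left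
      (eval_nodal_not_at_node fun a ha h => hx (Nat.cast_injective h ▸ ha))
  -- Pad `T` with an even block of large roots up to `j` or `j - 1` roots; `μ` still sees `0`.
  set M := T.sup id + 1
  have hM : ∀ a ∈ T, a < M := fun a ha => Nat.lt_succ_of_le (le_sup (f := id) ha)
  set T' := T ∪ Ico M (M + 2 * ((j - #T) / 2))
  have hcard : #T' = #T + 2 * ((j - #T) / 2) := by
    rw [card_union_of_disjoint (disjoint_left.mpr fun a ha ha' =>
      (hM a ha).not_ge (mem_Ico.mp ha').1), Nat.card_Ico, Nat.add_sub_cancel_left]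
  have hT' : PolyP j (nodal T' (↑)) ∨ PolyP (j - 1) (nodal T' (↑)) := by
    have := polyP_nodal (hT.union_Ico hM ((j - #T) / 2))
    obtain h | h : #T' = j ∨ #T' = j - 1 := by omega
    exacts [.inl (h ▸ this), .inr (h ▸ this)]
  have hzero : HasSum (fun x : ℕ => (nodal T' (↑)).eval (x : ℝ) * μ x) 0 := by
    convert hasSum_zero with x
    by_cases hx : x ∈ T
    · rw [eval_nodal_at_node (v := ((↑) : ℕ → ℝ)) (mem_union_left _ hx), zero_mul]
    · rw [hsupp x hx, mul_zero]
  have hdeg : (nodal T' (↑) : ℝ[X]).natDegree ≤ j := by rw [natDegree_nodal]; omega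
  exact (hpos _ hT').ne' ((hμ.hasSum_eval hdeg).unique hzero)

end Positivity

section Minimizer

variable {n : ℕ} {m μ : ℕ → ℝ} {S : Finset ℕ} {b y : ℕ}

def admissibleSets (n : ℕ) : Set (Finset ℕ) := {S | Admissible S ∧ #S = n}

lemma one_le_abs_natCast_sub_natCast {x a : ℕ} (h : x ≠ a) : (1 : ℝ) ≤ |(x : ℝ) - a| := by
  have : (1 : ℤ) ≤ |(x : ℤ) - a| := Int.one_le_abs (sub_ne_zero.mpr (by exact_mod_cast h))
  exact_mod_cast this

lemma isMonicOfDegree_nodal {R ι : Type*} [CommRing R] [Nontrivial R] (s : Finset ι)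
    (v : ι → R) : IsMonicOfDegree (nodal s v) #s :=
  ⟨natDegree_nodal, nodal_monic⟩

lemma natDegree_nodal_sub_le (hn : n ≠ 0) (hS : #S = n) {q : ℝ[X]}
    (hq : IsMonicOfDegree q n) : (nodal S ((↑) : ℕ → ℝ) - q).natDegree ≤ n - 1 :=
  Nat.le_sub_one_of_lt
    ((hS ▸ isMonicOfDegree_nodal S ((↑) : ℕ → ℝ)).natDegree_sub_lt hn hq)

lemma exists_isMinOn_of_le_of_not_subset_range {p : Set (Finset ℕ)} {f : Finset ℕ → ℝ}
    {S₀ : Finset ℕ} (h₀ : S₀ ∈ p) (B : ℕ)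
    (hB : ∀ S ∈ p, ¬S ⊆ range B → f S₀ ≤ f S) :
    ∃ s ∈ p, IsMinOn f p s := by
  classical
  obtain ⟨s, hs, hmin⟩ := exists_min_image (insert S₀ {S ∈ (range B).powerset | S ∈ p}) f
    ⟨S₀, mem_insert_self _ _⟩
  have hsp : s ∈ p := by
    rcases mem_insert.mp hs with rfl | h
    exacts [h₀, (mem_filter.mp h).2]
  refine ⟨s, hsp, isMinOn_iff.mpr fun T hT => ?_⟩
  by_cases hTB : T ⊆ range B
  · exact hmin T (mem_insert_of_mem (mem_filter.mpr ⟨mem_powerset.mpr hTB, hT⟩))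
  · exact (hmin S₀ (mem_insert_self _ _)).trans (hB T hT hTB)

lemma exists_isMinOn_and_le_of_eq {α : Type*} {p : Set α} {f : α → ℝ} (g : α → ℕ)
    (h : ∃ a ∈ p, IsMinOn f p a) :
    ∃ a ∈ p, IsMinOn f p a ∧ ∀ b ∈ p, f b = f a → g a ≤ g b := by
  obtain ⟨a₀, ha₀, hmin₀⟩ := h
  set P := {a | a ∈ p ∧ IsMinOn f p a}
  obtain ⟨ha, hmin⟩ := Function.argminOn_mem g P ⟨a₀, ha₀, hmin₀⟩
  refine ⟨_, ha, hmin, fun b hb hfb => Function.argminOn_le g P ⟨hb, ?_⟩⟩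
  exact isMinOn_iff.mpr fun c hc => hfb ▸ isMinOn_iff.mp hmin c hc

lemma exists_finset_subset_forall_not_subset {p : Set (Finset ℕ)} (hp : ∀ S ∈ p, #S = n)
    {A : Set ℕ} (hA : ∀ S ∈ p, ¬A ⊆ S) :
    ∃ F : Finset ℕ, ↑F ⊆ A ∧ ∀ S ∈ p, ¬F ⊆ S := by
  by_cases hfin : A.Finite
  · exact ⟨hfin.toFinset, by simp, fun S hS h => hA S hS (by simpa using h)⟩
  · obtain ⟨F, hFA, hF⟩ := Set.Infinite.exists_subset_card_eq hfin (n + 1)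
    exact ⟨F, hFA, fun S hS h => by have := card_le_card h; have := hp S hS; omega⟩

lemma tendsto_quadratic_atTop {c : ℝ} (hc : 0 < c) (p q : ℝ) :
    Tendsto (fun x : ℕ => c * (x : ℝ) ^ 2 + p * x + q) atTop atTop := by
  have := tendsto_atTop_of_leadingCoeff_nonneg (C c * X ^ 2 + C p * X + C q)
    (by rw [degree_quadratic hc.ne']; norm_num)
    (by rw [leadingCoeff_quadratic hc.ne']; exact hc.le)
  simp only [eval_add, eval_mul, eval_C, eval_pow, eval_X] at this
  exact this.comp tendsto_natCast_atTop_atTop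

theorem isMinOn_of_support_subset (hn : n ≠ 0) (hμ0 : ∀ x, 0 ≤ μ x)
    (hμ : HasMoments (n - 1) μ m) (hS : S ∈ admissibleSets n)
    (hsupp : Function.support μ ⊆ S) :
    IsMinOn (fun T => Lf (nodal T (↑)) m) (admissibleSets n) S := by
  refine isMinOn_iff.mpr fun T hT => ?_
  have hdeg := natDegree_nodal_sub_le hn hT.2
    (hS.2 ▸ isMonicOfDegree_nodal S ((↑) : ℕ → ℝ))
  have hterm : ∀ x : ℕ, 0 ≤ (nodal T (↑) - nodal S (↑) : ℝ[X]).eval (x : ℝ) * μ x := by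
    intro x
    by_cases hx : x ∈ S
    · rw [eval_sub, eval_nodal_at_node (v := ((↑) : ℕ → ℝ)) hx, sub_zero]
      exact mul_nonneg (admissible_iff_eval_nonneg.mp hT.1 x) (hμ0 x)
    · rw [Function.notMem_support.mp fun h => hx (hsupp h), mul_zero]
  simpa [sub_nonneg] using (hμ.hasSum_eval hdeg).nonneg hterm

lemma pow_sub_le_eval_nodal (hn : n ≠ 0) (hS : Admissible S) (hcard : #S = n)
    (hb : ∀ a ∈ S, a ≤ b) (x : ℕ) :
    (x : ℝ) ^ n - n * b * x ^ (n - 1) ≤ (nodal S (↑)).eval (x : ℝ) := by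
  have hnn := admissible_iff_eval_nonneg.mp hS x
  rcases le_total x b with hxb | hbx
  · have : (x : ℝ) ^ n ≤ n * b * x ^ (n - 1) := calc
      (x : ℝ) ^ n = x ^ (n - 1) * x := by rw [← pow_succ, Nat.sub_add_cancel (by omega)]
      _ ≤ x ^ (n - 1) * (n * b) := by
        gcongr
        exact_mod_cast hxb.trans (Nat.le_mul_of_pos_left b (by omega))
      _ = n * b * x ^ (n - 1) := by ring
    linarith
  · have hprod : ((x : ℝ) - b) ^ n ≤ (nodal S (↑)).eval (x : ℝ) := by
      rw [eval_nodal, ← hcard, ← prod_const]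
      exact prod_le_prod (fun _ _ => sub_nonneg.mpr (by exact_mod_cast hbx))
        fun a ha => sub_le_sub_left (by exact_mod_cast hb a ha) _
    have hbx' : (b : ℝ) ≤ x := by exact_mod_cast hbx
    have hpow := abs_pow_sub_pow_le (x : ℝ) (x - b) n
    have hdiff : |(x : ℝ) - (x - b)| = b := by rw [sub_sub_cancel, Nat.abs_cast]
    have hmax : max |(x : ℝ)| |(x : ℝ) - b| = x := by
      rw [Nat.abs_cast, abs_of_nonneg (sub_nonneg.mpr hbx')]
      exact max_eq_left (by linarith [Nat.cast_nonneg (α := ℝ) b])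
    rw [hdiff, hmax] at hpow
    linarith [le_abs_self ((x : ℝ) ^ n - (x - b) ^ n)]

theorem Lf_nodal_ge (hn : n ≠ 0) (hμ0 : ∀ x, 0 ≤ μ x) (hμ : HasMoments (n - 1) μ m)
    (hS : Admissible S) (hcard : #S = n) (hb : ∀ a ∈ S, a ≤ b) (y : ℕ) :
    m n - n * b * m (n - 1) + μ y * ((nodal S (↑)).eval (y : ℝ) - y ^ n) ≤
      Lf (nodal S (↑)) m := by
  -- `h ≥ 0` on `ℕ` and has degree `< n`, so `Lf h` is a series of nonnegative terms.
  obtain ⟨h, hh⟩ : ∃ h : ℝ[X], h = nodal S (↑) - X ^ n + C (n * b : ℝ) * X ^ (n - 1) :=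
    ⟨_, rfl⟩
  have hdeg : h.natDegree ≤ n - 1 := hh ▸ natDegree_add_le_of_degree_le
    (natDegree_nodal_sub_le hn hcard (isMonicOfDegree_X_pow ℝ n))
    (natDegree_C_mul_X_pow_le (n * b : ℝ) (n - 1))
  have heval : ∀ x : ℕ, h.eval (x : ℝ) =
      (nodal S (↑)).eval (x : ℝ) - x ^ n + n * b * x ^ (n - 1) := by
    simp [hh]
  have hnn : ∀ x : ℕ, 0 ≤ h.eval (x : ℝ) := fun x => by
    rw [heval]; linarith [pow_sub_le_eval_nodal hn hS hcard hb x]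
  have hterm := le_hasSum (hμ.hasSum_eval hdeg) y fun x _ => mul_nonneg (hnn x) (hμ0 x)
  have hLf : Lf h m = Lf (nodal S (↑)) m - m n + n * b * m (n - 1) := by
    rw [hh, Lf_add, Lf_sub, Lf_C_mul, Lf_X_pow, Lf_X_pow]
  have hextra : 0 ≤ n * b * (y : ℝ) ^ (n - 1) * μ y := by have := hμ0 y; positivity
  rw [heval] at hterm
  nlinarith

lemma mul_le_eval_nodal (hS : Admissible S) (hbS : b ∈ S) (hb : ∀ a ∈ S, a ≤ b)
    (hy : y ∉ S) (hyb : y < b) :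
    ((b : ℝ) - 1 - y) * (b - y) ≤ (nodal S (↑)).eval (y : ℝ) := by
  have hb1 := hS.pred_mem hbS hb (by omega)
  have hyb1 : y < b - 1 := lt_of_le_of_ne (by omega) fun h => hy (h ▸ hb1)
  rw [eval_nodal_eq_neg_one_pow_mul, (hS y hy).neg_one_pow, one_mul]
  calc ((b : ℝ) - 1 - y) * (b - y) = ∏ a ∈ {b - 1, b}, |(y : ℝ) - a| := by
        rw [prod_pair (by omega), abs_of_neg (by rw [sub_neg]; exact_mod_cast hyb1),
          abs_of_neg (by rw [sub_neg]; exact_mod_cast hyb), Nat.cast_sub (by omega)]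
        ring
    _ ≤ ∏ a ∈ S, |(y : ℝ) - a| :=
        prod_le_prod_of_subset_of_one_le (insert_subset hb1 (singleton_subset_iff.mpr hbS))
          (fun _ _ => abs_nonneg _)
          fun a ha _ => one_le_abs_natCast_sub_natCast fun h => hy (h ▸ ha)

theorem exists_isMinOn_Lf_nodal (hn : n ≠ 0) (hμ0 : ∀ x, 0 ≤ μ x)
    (hμ : HasMoments (n - 1) μ m) :
    ∃ s ∈ admissibleSets n, IsMinOn (fun S => Lf (nodal S (↑)) m) (admissibleSets n) s := by
  by_cases hA : ∃ S ∈ admissibleSets n, Function.support μ ⊆ S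
  · obtain ⟨S, hS, hsupp⟩ := hA
    exact ⟨S, hS, isMinOn_of_support_subset hn hμ0 hμ hS hsupp⟩
  push Not at hA
  -- Every admissible `S` misses a point `y` of a fixed finite `F ⊆ supp μ`, and the mass at `y`
  -- makes `Lf (nodal S)` grow quadratically in `max S`.
  obtain ⟨F, hFμ, hF⟩ := exists_finset_subset_forall_not_subset (fun S hS => hS.2) hA
  have h₀ : range n ∈ admissibleSets n := ⟨admissible_range n, card_range n⟩
  have hev : ∀ᶠ b : ℕ in atTop, ∀ y ∈ F, y < b ∧ Lf (nodal (range n) (↑)) m ≤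
      m n - n * b * m (n - 1) + μ y * (((b : ℝ) - 1 - y) * (b - y) - y ^ n) := by
    refine (eventually_all_finset F).2 fun y hy => (eventually_gt_atTop y).and ?_
    have hμy : 0 < μ y := (hμ0 y).lt_of_ne' (hFμ hy)
    refine ((tendsto_quadratic_atTop hμy (-(n * m (n - 1)) - μ y * (2 * y + 1))
      (m n + μ y * (y * (y + 1) - y ^ n))).eventually_ge_atTop
        (Lf (nodal (range n) (↑)) m)).mono fun b hb => ?_
    exact hb.trans_eq (by ring)
  obtain ⟨B, hB⟩ := eventually_atTop.mp hev
  refine exists_isMinOn_of_le_of_not_subset_range h₀ B fun S hS hSB => ?_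
  obtain ⟨y, hyF, hyS⟩ := not_subset.mp (hF S hS)
  have hne : S.Nonempty := nonempty_iff_ne_empty.mpr fun h => hSB (h ▸ empty_subset _)
  have hBb : B ≤ S.max' hne := by
    by_contra h
    exact hSB fun a ha => mem_range.mpr ((le_max' S a ha).trans_lt (not_le.mp h))
  obtain ⟨hyb, hK⟩ := hB _ hBb y hyF
  have hbmax : ∀ a ∈ S, a ≤ S.max' hne := fun a ha => le_max' S a ha
  calc Lf (nodal (range n) (↑)) m ≤ _ := hK
    _ ≤ m n - n * (S.max' hne) * m (n - 1) +
          μ y * ((nodal S (↑)).eval (y : ℝ) - y ^ n) := by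
        gcongr
        · exact hμ0 y
        · exact mul_le_eval_nodal hS.1 (max'_mem S hne) hbmax hyS hyb
    _ ≤ Lf (nodal S (↑)) m := Lf_nodal_ge hn hμ0 hμ hS.1 hS.2 hbmax y

end Minimizer

section FirstOrderConditions

variable {n : ℕ} {m : ℕ → ℝ} {s : Finset ℕ} {a y : ℕ}

lemma Lf_nodal_insert_erase (m : ℕ → ℝ) (ha : a ∈ s) (hy : y ∉ s.erase a) :
    Lf (nodal (insert y (s.erase a)) (↑)) m =
      Lf (nodal s (↑)) m + (a - y) * Lf (nodal (s.erase a) (↑)) m := by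
  rw [nodal_insert_eq_nodal hy, nodal_eq_mul_nodal_erase (v := ((↑) : ℕ → ℝ)) ha,
    ← Lf_C_mul, ← Lf_add, map_sub]
  ring_nf

lemma nodalWeight_pos_iff (ha : a ∈ s) :
    0 < nodalWeight s ((↑) : ℕ → ℝ) a ↔ Even (countAbove s a) := by
  rw [nodalWeight_eq_eval_nodal_erase_inv, inv_pos, eval_nodal_pos_iff (notMem_erase a s),
    ← countAbove_erase_add ha a, if_neg (lt_irrefl a), add_zero]

lemma insert_erase_mem_admissibleSets (hs : s ∈ admissibleSets n) (ha : a ∈ s) (hy : y ∉ s)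
    (hbetween : ∀ z, a < z ∧ z < y ∨ y < z ∧ z < a → z ∈ s)
    (hpar : Even (countAbove s a + if a < y then 1 else 0)) :
    insert y (s.erase a) ∈ admissibleSets n := by
  refine ⟨hs.1.insert_erase ha hy hbetween hpar, ?_⟩
  rw [card_insert_of_notMem fun h => hy (mem_of_mem_erase h), card_erase_of_mem ha,
    Nat.sub_add_cancel (card_pos.mpr ⟨a, ha⟩), hs.2]

lemma IsMinOn.mul_Lf_nodal_erase_nonneg
    (hmin : IsMinOn (fun S => Lf (nodal S (↑)) m) (admissibleSets n) s)
    (hs : s ∈ admissibleSets n) (ha : a ∈ s) (hy : y ∉ s)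
    (hbetween : ∀ z, a < z ∧ z < y ∨ y < z ∧ z < a → z ∈ s)
    (hpar : Even (countAbove s a + if a < y then 1 else 0)) :
    0 ≤ ((a : ℝ) - y) * Lf (nodal (s.erase a) (↑)) m := by
  have := isMinOn_iff.mp hmin _ (insert_erase_mem_admissibleSets hs ha hy hbetween hpar)
  rw [Lf_nodal_insert_erase m ha fun h => hy (mem_of_mem_erase h)] at this
  linarith

lemma IsMinOn.Lf_nodal_erase_nonpos
    (hmin : IsMinOn (fun S => Lf (nodal S (↑)) m) (admissibleSets n) s)
    (hs : s ∈ admissibleSets n) (ha : a ∈ s) (hodd : ¬Even (countAbove s a)) :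
    Lf (nodal (s.erase a) (↑)) m ≤ 0 := by
  have hex : ∃ z, a < z ∧ z ∉ s := by
    obtain ⟨z, hz⟩ := Infinite.exists_notMem_finset (s ∪ range (a + 1))
    rw [mem_union, mem_range, not_or, not_lt] at hz
    exact ⟨z, hz.2, hz.1⟩
  obtain ⟨hay, hys⟩ := Nat.find_spec hex
  have hbetween : ∀ z, a < z ∧ z < Nat.find hex ∨ Nat.find hex < z ∧ z < a → z ∈ s := by
    rintro z (⟨h1, h2⟩ | ⟨h1, h2⟩)
    · by_contra h
      exact Nat.find_min hex h2 ⟨h1, h⟩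
    · omega
  have hpar : Even (countAbove s a + if a < Nat.find hex then 1 else 0) := by
    rw [if_pos hay]
    exact (Nat.not_even_iff_odd.mp hodd).add_one
  have := hmin.mul_Lf_nodal_erase_nonneg hs ha hys hbetween hpar
  have hay' : (a : ℝ) < Nat.find hex := by exact_mod_cast hay
  nlinarith

lemma IsMinOn.Lf_nodal_erase_pos
    (hmin : IsMinOn (fun S => Lf (nodal S (↑)) m) (admissibleSets n) s)
    (hs : s ∈ admissibleSets n)
    (hsum : ∀ T ∈ admissibleSets n, Lf (nodal T (↑)) m = Lf (nodal s (↑)) m →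
      ∑ a ∈ s, a ≤ ∑ a ∈ T, a)
    (hpos : ∀ T, Admissible T → #T ≤ n - 1 → 0 < Lf (nodal T (↑)) m)
    (ha : a ∈ s) (heven : Even (countAbove s a)) : 0 < Lf (nodal (s.erase a) (↑)) m := by
  by_cases hbelow : ∀ z < a, z ∈ s
  · exact hpos _ (hs.1.erase ha heven hbelow) (by rw [card_erase_of_mem ha, hs.2])
  push Not at hbelow
  obtain ⟨z, hza, hzs⟩ := hbelow
  set y := Nat.findGreatest (· ∉ s) a
  have hys : y ∉ s := Nat.findGreatest_spec (P := (· ∉ s)) hza.le hzs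
  have hya : y < a := (Nat.findGreatest_le a).lt_of_ne fun h => hys (by rwa [← h] at ha)
  have hbetween : ∀ w, a < w ∧ w < y ∨ y < w ∧ w < a → w ∈ s := by
    rintro w (⟨h1, h2⟩ | ⟨h1, h2⟩)
    · omega
    · by_contra h
      exact Nat.findGreatest_is_greatest h1 h2.le h
  have hpar : Even (countAbove s a + if a < y then 1 else 0) := by
    rwa [if_neg (not_lt.mpr hya.le), add_zero]
  have hnonneg := hmin.mul_Lf_nodal_erase_nonneg hs ha hys hbetween hpar
  have hya' : (y : ℝ) < a := by exact_mod_cast hya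
  refine (nonneg_of_mul_nonneg_right (by linarith) (sub_pos.mpr hya')).lt_of_ne fun h0 => ?_
  -- Otherwise the swap of `a` for `y` would be a minimizer with a smaller root sum.
  have hyE : y ∉ s.erase a := fun h => hys (mem_of_mem_erase h)
  have hle := hsum _ (insert_erase_mem_admissibleSets hs ha hys hbetween hpar)
    (by rw [Lf_nodal_insert_erase m ha hyE, ← h0, mul_zero, add_zero])
  rw [sum_insert hyE] at hle
  have := sum_erase_add s id ha
  simp only [id] at this
  omega

lemma IsMinOn.Lf_nodal_erase_sign

    (hmin : IsMinOn (fun S => Lf (nodal S (↑)) m) (admissibleSets n) s)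
    (hs : s ∈ admissibleSets n)
    (hsum : ∀ T ∈ admissibleSets n, Lf (nodal T (↑)) m = Lf (nodal s (↑)) m →
      ∑ a ∈ s, a ≤ ∑ a ∈ T, a)
    (hpos : ∀ T, Admissible T → #T ≤ n - 1 → 0 < Lf (nodal T (↑)) m) (ha : a ∈ s) :
    (0 < nodalWeight s ((↑) : ℕ → ℝ) a → 0 < Lf (nodal (s.erase a) (↑)) m) ∧
      (nodalWeight s ((↑) : ℕ → ℝ) a < 0 → Lf (nodal (s.erase a) (↑)) m ≤ 0) :=
  ⟨fun hw => hmin.Lf_nodal_erase_pos hs hsum hpos ha ((nodalWeight_pos_iff ha).mp hw),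
    fun hw => hmin.Lf_nodal_erase_nonpos hs ha fun he =>
      hw.not_gt ((nodalWeight_pos_iff ha).mpr he)⟩

end FirstOrderConditions

section Construction

lemma eq_interpolate_add_C_mul_nodal {F ι : Type*} [Field F] [DecidableEq ι] {s : Finset ι}
    {v : ι → F} (hvs : Set.InjOn v s) {Q : F[X]} (hQ : Q.natDegree ≤ #s) :
    Q = interpolate s v (fun i => Q.eval (v i)) + C (Q.coeff #s) * nodal s v := by
  have hdeg : (Q - C (Q.coeff #s) * nodal s v).degree < #s := by
    refine degree_lt_iff_coeff_zero _ _ |>.mpr fun k hk => ?_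
    have hk' : #s ≤ k := by exact_mod_cast hk
    have hlead : (nodal s v).coeff #s = 1 :=
      natDegree_nodal (v := v) ▸ nodal_monic.coeff_natDegree
    rw [coeff_sub, coeff_C_mul]
    rcases hk'.eq_or_lt with h | h
    · rw [← h, hlead, mul_one, sub_self]
    · have hnodal : (nodal s v).natDegree < k := by rwa [natDegree_nodal]
      rw [coeff_eq_zero_of_natDegree_lt (hQ.trans_lt h), coeff_eq_zero_of_natDegree_lt hnodal,
        mul_zero, sub_zero]
  rw [← eq_interpolate_of_eval_eq _ hvs hdeg fun i hi => by
    rw [eval_sub, eval_mul, eval_nodal_at_node hi, mul_zero, sub_zero], sub_add_cancel]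

variable {n : ℕ} {m : ℕ → ℝ} {s : Finset ℕ}

lemma sum_eval_mul_add_eval_mul (hs : #s = n) {t : ℕ} {c : ℝ}
    (hc : c * (nodal s (↑)).eval (t : ℝ) = Lf (nodal s (↑)) m) {Q : ℝ[X]}
    (hQ : Q.natDegree ≤ n) :
    ∑ x ∈ s, Q.eval (x : ℝ) *
        (Lf (Lagrange.basis s (↑) x) m - c * (Lagrange.basis s (↑) x).eval (t : ℝ)) +
      Q.eval (t : ℝ) * c = Lf Q m := by
  have hQ' := eq_interpolate_add_C_mul_nodal (v := ((↑) : ℕ → ℝ)) Nat.cast_injective.injOn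
    (hs ▸ hQ)
  have hLf := congrArg (Lf · m) hQ'
  have heval := congrArg (eval (t : ℝ)) hQ'
  simp only [interpolate_apply, Lf_add, Lf_sum, Lf_C_mul, eval_add, eval_finsetSum, eval_mul,
    eval_C] at hLf heval
  simp only [mul_sub, sum_sub_distrib, mul_left_comm _ c, ← mul_sum]
  linear_combination -hLf + c * heval + Q.coeff #s * hc

lemma eval_nodal_pos_of_forall_lt {t : ℕ} (ht : ∀ a ∈ s, a < t) :
    0 < (nodal s ((↑) : ℕ → ℝ)).eval (t : ℝ) := by
  rw [eval_nodal]
  exact prod_pos fun a ha => sub_pos.mpr (by exact_mod_cast ht a ha)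

lemma eventually_Lf_basis_sub_nonneg {a : ℕ} (ha : a ∈ s) (hL : 0 ≤ Lf (nodal s (↑)) m)
    (hsign : (0 < nodalWeight s ((↑) : ℕ → ℝ) a → 0 < Lf (nodal (s.erase a) (↑)) m) ∧
      (nodalWeight s ((↑) : ℕ → ℝ) a < 0 → Lf (nodal (s.erase a) (↑)) m ≤ 0)) :
    ∀ᶠ t : ℕ in atTop, 0 ≤ Lf (Lagrange.basis s (↑) a) m - Lf (nodal s (↑)) m /
      (nodal s (↑)).eval (t : ℝ) * (Lagrange.basis s (↑) a).eval (t : ℝ) := by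
  set L := Lf (nodal s ((↑) : ℕ → ℝ)) m
  set w := nodalWeight s ((↑) : ℕ → ℝ) a
  have hrepr : ∀ t : ℕ, (∀ b ∈ s, b < t) → Lf (Lagrange.basis s (↑) a) m -
      L / (nodal s (↑)).eval (t : ℝ) * (Lagrange.basis s (↑) a).eval (t : ℝ) =
        w * (Lf (nodal (s.erase a) (↑)) m - L / ((t : ℝ) - a)) := by
    intro t ht
    have hPt := (eval_nodal_pos_of_forall_lt ht).ne'
    have hta : (t : ℝ) - a ≠ 0 := sub_ne_zero.mpr (by exact_mod_cast (ht a ha).ne')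
    rw [eval_basis_not_at_node ha (sub_ne_zero.mp hta),
      basis_eq_prod_sub_inv_mul_nodal_div (v := ((↑) : ℕ → ℝ)) ha,
      ← nodal_erase_eq_nodal_div ha, Lf_C_mul]
    field_simp
    ring
  have hlarge : ∀ᶠ t : ℕ in atTop, ∀ b ∈ s, b < t :=
    (eventually_all_finset s).2 fun b _ => eventually_gt_atTop b
  have hlim : Tendsto (fun t : ℕ => L / ((t : ℝ) - a)) atTop (𝓝 0) :=
    tendsto_const_nhds.div_atTop (tendsto_atTop_add_const_right _ _ tendsto_natCast_atTop_atTop)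
  rcases (nodalWeight_ne_zero (Nat.cast_injective (R := ℝ)).injOn ha).lt_or_gt with hw | hw
  · filter_upwards [hlarge] with t ht
    have hta : (0 : ℝ) < t - a := sub_pos.mpr (by exact_mod_cast ht a ha)
    rw [hrepr t ht]
    exact mul_nonneg_of_nonpos_of_nonpos hw.le
      (sub_nonpos.mpr ((hsign.2 hw).trans (div_nonneg hL hta.le)))
  · filter_upwards [hlarge, hlim.eventually (ge_mem_nhds (hsign.1 hw))] with t ht hle
    rw [hrepr t ht]
    exact mul_nonneg hw.le (sub_nonneg.mpr hle)

theorem realizableN0_of_nodalWeight_sign (hs : #s = n) (hL : 0 ≤ Lf (nodal s (↑)) m)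
    (hsign : ∀ a ∈ s,
      (0 < nodalWeight s ((↑) : ℕ → ℝ) a → 0 < Lf (nodal (s.erase a) (↑)) m) ∧
        (nodalWeight s ((↑) : ℕ → ℝ) a < 0 → Lf (nodal (s.erase a) (↑)) m ≤ 0)) :
    RealizableN0 n m := by
  obtain ⟨t, ht, hnn⟩ := (((eventually_all_finset s).2 fun b _ => eventually_gt_atTop b).and
    ((eventually_all_finset s).2 fun a ha =>
      eventually_Lf_basis_sub_nonneg ha hL (hsign a ha))).exists
  set c := Lf (nodal s (↑)) m / (nodal s ((↑) : ℕ → ℝ)).eval (t : ℝ)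
  have hPt := eval_nodal_pos_of_forall_lt ht
  have hts : t ∉ s := fun h => lt_irrefl t (ht t h)
  refine realizableN0_of_finset (insert t s)
    (fun x => if x = t then c else
      Lf (Lagrange.basis s (↑) x) m - c * (Lagrange.basis s (↑) x).eval (t : ℝ))
    ?_ fun k hk => ?_
  · intro x hx
    rcases mem_insert.mp hx with rfl | hx
    · simpa using div_nonneg hL hPt.le
    · simpa [ne_of_mem_of_not_mem hx hts] using hnn x hx
  · have hmom := sum_eval_mul_add_eval_mul (m := m) hs (div_mul_cancel₀ _ hPt.ne')
      (natDegree_X_pow_le (R := ℝ) k |>.trans hk)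
    rw [sum_insert hts, if_pos rfl,
      sum_congr rfl fun x hx => by rw [if_neg (ne_of_mem_of_not_mem hx hts)]]
    simp only [eval_pow, eval_X, Lf_X_pow] at hmom
    linarith

end Construction

theorem realizable_iff_min_poly_nonneg_general (n : ℕ) (hn : 2 ≤ n) (m : ℕ → ℝ)
    (hI : IRealizable (n - 1) m) :
    ∃ Pstar, PolyP n Pstar ∧ (∀ P, PolyP n P → Lf Pstar m ≤ Lf P m) ∧
      (RealizableN0 n m ↔ 0 ≤ Lf Pstar m) ∧
      (0 < Lf Pstar m → IRealizable n m) ∧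
      (Lf Pstar m = 0 → BRealizable n m) := by
  obtain ⟨⟨μ, hμ0, hμ⟩, hpos⟩ := hI
  obtain ⟨s, hs, hmin, hsum⟩ := exists_isMinOn_and_le_of_eq (fun S => ∑ a ∈ S, a)
    (exists_isMinOn_Lf_nodal (by omega) hμ0 hμ)
  have hPs : PolyP n (nodal s (↑)) := hs.2 ▸ polyP_nodal hs.1
  have hle : ∀ P, PolyP n P → Lf (nodal s (↑)) m ≤ Lf P m := fun P hP => by
    obtain ⟨T, hT, hTadm, rfl⟩ := hP.exists_eq_nodal
    exact isMinOn_iff.mp hmin T ⟨hTadm, hT⟩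
  have hreal : 0 ≤ Lf (nodal s (↑)) m → RealizableN0 n m := fun hL =>
    realizableN0_of_nodalWeight_sign hs.2 hL fun a ha => hmin.Lf_nodal_erase_sign hs hsum
      (fun T hT hTc => Lf_nodal_pos hμ0 hμ hpos hT hTc) ha
  refine ⟨nodal s (↑), hPs, hle, ⟨fun ⟨ν, hν0, hν⟩ => ?_, hreal⟩,
    fun h => ⟨hreal h.le, ?_⟩, fun h => ⟨hreal h.ge, _, .inl hPs, h⟩⟩
  · exact HasMoments.Lf_nonneg hν0 hν hPs.2.1.le (admissible_iff_eval_nonneg.mp hs.1)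
  · rintro P (hP | hP)
    exacts [h.trans_le (hle P hP), hpos P (.inl hP)]

/-- If `(m_1,…,m_{n-1})` is I-realizable then a minimizing polynomial
`P* ∈ 𝒫_n` exists and `(m_1,…,m_n)` is realizable iff `L_{P*}(m) ≥ 0`;
it is I-realizable if the inequality is strict and B-realizable if equality holds. -/
theorem realizable_iff_min_poly_nonneg (n : ℕ) (hn : 2 ≤ n) (m : ℕ → ℝ)
    (hm0 : m 0 = 1) (hI : IRealizable (n - 1) m) :
    ∃ Pstar, PolyP n Pstar ∧ (∀ P, PolyP n P → Lf Pstar m ≤ Lf P m) ∧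
      (RealizableN0 n m ↔ 0 ≤ Lf Pstar m) ∧
      (0 < Lf Pstar m → IRealizable n m) ∧
      (Lf Pstar m = 0 → BRealizable n m) :=
  realizable_iff_min_poly_nonneg_general n hn m hI
end

section
/- Let n ≥ 2 and m = (m_1,…,m_n) ∈ ℝ^n with m_0 := 1, and suppose (m_1,…,m_{n−1}) is B-realizable on ℕ₀, so that L_P(m) = 0 for some P ∈ 𝒫_{n−i} with i ∈ {1,2}. Then (m_1,…,m_n) is realizable on ℕ₀ if and only if L_{x^i P}(m) = 0, and in that case it is B-realizable. -/
open Polynomial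

/-! A measure realizing `(m_1,…,m_{n-1})` with `L_P(m) = 0` for some `P ≥ 0` on `ℕ₀` must be
supported on the finitely many zeros of `P`. Every realizing measure of `(m_1,…,m_n)` is then
also supported there, so `L_{x^i P}(m) = 0`; conversely, such a finitely supported measure has
all moments, and `L_{x^i P}(m) = 0` pins its `n`-th moment down to `m_n` because `x^i P` is monic
of degree `n`. For B-realizability, `P` (if `i = 1`) or `(x - a) P` with `a` the least
nonnegative integer that is not a root of `P` (if `i = 2`) lies in `𝒫_{n-1}`. -/

open Finset

def Realizes (μ : ℕ → ℝ) (j : ℕ) (m : ℕ → ℝ) : Prop :=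
  (∀ x, 0 ≤ μ x) ∧ ∀ k ≤ j, HasSum (fun x : ℕ => (x : ℝ) ^ k * μ x) (m k)

lemma Lf_eq_sum_range {Q : ℝ[X]} {N : ℕ} (m : ℕ → ℝ) (hQ : Q.natDegree < N) :
    Lf Q m = ∑ k ∈ range N, Q.coeff k * m k :=
  Q.sum_over_range' (f := fun k a => a * m k) (fun _ => zero_mul _) N hQ

lemma Lf_sub_Lf_of_eq_of_lt {Q : ℝ[X]} (hQ : Q.Monic) {m m' : ℕ → ℝ}
    (h : ∀ k < Q.natDegree, m k = m' k) :
    Lf Q m - Lf Q m' = m Q.natDegree - m' Q.natDegree := by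
  have hlt := Nat.lt_succ_self Q.natDegree
  rw [Lf_eq_sum_range m hlt, Lf_eq_sum_range m' hlt, ← sum_sub_distrib, sum_range_succ,
    sum_eq_zero fun k hk => by rw [h k (mem_range.mp hk)]; ring, hQ.coeff_natDegree]
  ring

lemma finite_setOf_eval_natCast_eq_zero {P : ℝ[X]} (hP : P ≠ 0) :
    {x : ℕ | P.eval (x : ℝ) = 0}.Finite :=
  (P.roots.toFinset.finite_toSet.preimage Nat.cast_injective.injOn).subset
    fun x hx => by simpa [hP] using hx

namespace Realizes

variable {μ m : ℕ → ℝ} {j : ℕ}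

lemma hasSum_eval (hμ : Realizes μ j m) {Q : ℝ[X]} (hQ : Q.natDegree ≤ j) :
    HasSum (fun x : ℕ => Q.eval (x : ℝ) * μ x) (Lf Q m) := by
  have hQ' := Nat.lt_succ_of_le hQ
  have heval : (fun x : ℕ => Q.eval (x : ℝ) * μ x) =
      fun x : ℕ => ∑ k ∈ range (j + 1), Q.coeff k * ((x : ℝ) ^ k * μ x) := by
    funext x
    rw [eval_eq_sum_range' hQ', sum_mul]
    exact sum_congr rfl fun k _ => by ring
  rw [Lf_eq_sum_range m hQ', heval]
  exact hasSum_sum fun k hk => (hμ.2 k (Nat.lt_succ_iff.mp (mem_range.mp hk))).mul_left _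

lemma Lf_eq_zero_of_eval_eq_zero (hμ : Realizes μ j m) {Q : ℝ[X]} (hQ : Q.natDegree ≤ j)
    (h : ∀ x : ℕ, μ x ≠ 0 → Q.eval (x : ℝ) = 0) : Lf Q m = 0 := by
  refine (hμ.hasSum_eval hQ).unique ?_
  convert hasSum_zero with x
  by_cases hx : μ x = 0
  · rw [hx, mul_zero]
  · rw [h x hx, zero_mul]

lemma eval_eq_zero_of_dvd (hμ : Realizes μ j m) {P Q : ℝ[X]} (hP : P.natDegree ≤ j)
    (hPnn : ∀ x : ℕ, 0 ≤ P.eval (x : ℝ)) (hL : Lf P m = 0) (hPQ : P ∣ Q) {x : ℕ}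
    (hx : μ x ≠ 0) : Q.eval (x : ℝ) = 0 := by
  have hsum := hμ.hasSum_eval hP
  rw [hL] at hsum
  have hle : P.eval (x : ℝ) * μ x ≤ 0 :=
    le_hasSum hsum x fun y _ => mul_nonneg (hPnn y) (hμ.1 y)
  obtain ⟨T, rfl⟩ := hPQ
  rw [eval_mul,
    (mul_eq_zero.mp (le_antisymm hle (mul_nonneg (hPnn x) (hμ.1 x)))).resolve_right hx, zero_mul]

lemma Lf_eq_zero_of_dvd (hμ : Realizes μ j m) {P Q : ℝ[X]} (hP : P.natDegree ≤ j)
    (hPnn : ∀ x : ℕ, 0 ≤ P.eval (x : ℝ)) (hL : Lf P m = 0) (hPQ : P ∣ Q)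
    (hQ : Q.natDegree ≤ j) : Lf Q m = 0 :=
  hμ.Lf_eq_zero_of_eval_eq_zero hQ fun _ => hμ.eval_eq_zero_of_dvd hP hPnn hL hPQ

lemma succ_of_Lf_eq_zero (hμ : Realizes μ j m) {P Q : ℝ[X]} (hP0 : P ≠ 0)
    (hP : P.natDegree ≤ j) (hPnn : ∀ x : ℕ, 0 ≤ P.eval (x : ℝ)) (hLP : Lf P m = 0)
    (hPQ : P ∣ Q) (hQ : Q.Monic) (hQdeg : Q.natDegree = j + 1) (hLQ : Lf Q m = 0) :
    Realizes μ (j + 1) m := by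
  set Z := (finite_setOf_eval_natCast_eq_zero hP0).toFinset
  have hZ : ∀ x ∉ Z, μ x = 0 := fun x hx => by
    by_contra hμx
    exact hx ((Set.Finite.mem_toFinset _).mpr (hμ.eval_eq_zero_of_dvd hP hPnn hLP dvd_rfl hμx))
  set m' : ℕ → ℝ := fun k => ∑ x ∈ Z, (x : ℝ) ^ k * μ x
  have hm' : ∀ k, HasSum (fun x : ℕ => (x : ℝ) ^ k * μ x) (m' k) := fun k =>
    hasSum_sum_of_ne_finset_zero fun x hx => by rw [hZ x hx, mul_zero]
  have hmm' : ∀ k ≤ j, m k = m' k := fun k hk => (hμ.2 k hk).unique (hm' k)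
  have hLQ' : Lf Q m' = 0 :=
    Lf_eq_zero_of_eval_eq_zero (j := j + 1) ⟨hμ.1, fun k _ => hm' k⟩ hQdeg.le
      fun _ => hμ.eval_eq_zero_of_dvd hP hPnn hLP hPQ
  have hsub := Lf_sub_Lf_of_eq_of_lt hQ (m := m) (m' := m') fun k hk => hmm' k (by omega)
  rw [hLQ, hLQ', hQdeg, sub_zero, eq_comm, sub_eq_zero] at hsub
  refine ⟨hμ.1, fun k hk => ?_⟩
  rcases Nat.lt_or_eq_of_le hk with hk | rfl
  · exact hμ.2 k (by omega)
  · rw [hsub]; exact hm' _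

end Realizes

lemma PolyP.exists_polyP_succ_dvd {j : ℕ} {P : ℝ[X]} (hP : PolyP j P) :
    ∃ R, PolyP (j + 1) R ∧ P ∣ R := by
  obtain ⟨hPm, hPd, ⟨S, hScard, rfl⟩, hPnn⟩ := hP
  have hex : ∃ a : ℕ, a ∉ S := S.exists_notMem
  set a := Nat.find hex
  have haS : a ∉ S := Nat.find_spec hex
  -- `X - a` is negative only below `a`, where every natural number is a root of `P`.
  have hlt : ∀ x : ℕ, x < a → (∏ b ∈ S, (X - C (b : ℝ))).eval (x : ℝ) = 0 := fun x hx => by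
    rw [eval_prod]
    exact prod_eq_zero (not_not.mp (Nat.find_min hex hx)) (by simp)
  refine ⟨(X - C (a : ℝ)) * ∏ b ∈ S, (X - C (b : ℝ)),
    ⟨(monic_X_sub_C _).mul hPm, ?_, ⟨insert a S, ?_, (prod_insert haS).symm⟩, fun x => ?_⟩,
    dvd_mul_left _ _⟩
  · rw [natDegree_mul (X_sub_C_ne_zero _) hPm.ne_zero, natDegree_X_sub_C, hPd, add_comm]
  · rw [card_insert_of_notMem haS, hScard]
  · rcases Nat.lt_or_ge x a with hx | hx
    · rw [eval_mul, hlt x hx, mul_zero]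
    · rw [eval_mul, eval_sub, eval_X, eval_C]
      exact mul_nonneg (sub_nonneg.mpr (Nat.cast_le.mpr hx)) (hPnn x)

theorem Brealizable_step_general (n : ℕ) (hn : 2 ≤ n) (m : ℕ → ℝ)
    (hB : BRealizable (n - 1) m)
    (i : ℕ) (hi : i = 1 ∨ i = 2) (P : Polynomial ℝ) (hP : PolyP (n - i) P)
    (hLP : Lf P m = 0) :
    (RealizableN0 n m ↔ Lf (X ^ i * P) m = 0) ∧
      (Lf (X ^ i * P) m = 0 → BRealizable n m) := by
  obtain ⟨⟨μ, hμ : Realizes μ (n - 1) m⟩, -⟩ := hB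
  have hi2 : 1 ≤ i ∧ i ≤ 2 := by omega
  have hPdeg : P.natDegree ≤ n - 1 := by rw [hP.2.1]; omega
  have hQdeg : (X ^ i * P).natDegree = n - 1 + 1 := by
    rw [(monic_X_pow i).natDegree_mul hP.1, natDegree_X_pow, hP.2.1]; omega
  have hback (hL : Lf (X ^ i * P) m = 0) : RealizableN0 n m := by
    have h := hμ.succ_of_Lf_eq_zero hP.1.ne_zero hPdeg hP.2.2.2 hLP (dvd_mul_left _ _)
      ((monic_X_pow i).mul hP.1) hQdeg hL
    rw [Nat.sub_add_cancel (by omega)] at h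
    exact ⟨μ, h⟩
  refine ⟨⟨fun ⟨ν, (hν : Realizes ν n m)⟩ => ?_, hback⟩, fun hL => ⟨hback hL, ?_⟩⟩
  · exact hν.Lf_eq_zero_of_dvd (hPdeg.trans (Nat.sub_le n 1)) hP.2.2.2 hLP (dvd_mul_left _ _)
      (by omega)
  · obtain ⟨R, hR, hPR⟩ : ∃ R, PolyP (n - 1) R ∧ P ∣ R := by
      rcases hi with rfl | rfl
      · exact ⟨P, hP, dvd_rfl⟩
      · simpa [show n - 2 + 1 = n - 1 by omega] using hP.exists_polyP_succ_dvd
    exact ⟨R, Or.inr hR, hμ.Lf_eq_zero_of_dvd hPdeg hP.2.2.2 hLP hPR hR.2.1.le⟩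

/-- If `(m_1,…,m_{n-1})` is B-realizable, with `L_P(m) = 0` for `P ∈ 𝒫_{n-i}`,
`i ∈ {1,2}`, then `(m_1,…,m_n)` is realizable iff `L_{x^i P}(m) = 0`,
and in that case it is B-realizable. -/
theorem Brealizable_step (n : ℕ) (hn : 2 ≤ n) (m : ℕ → ℝ) (hm0 : m 0 = 1)
    (hB : BRealizable (n - 1) m)
    (i : ℕ) (hi : i = 1 ∨ i = 2) (P : Polynomial ℝ) (hP : PolyP (n - i) P)
    (hLP : Lf P m = 0) :
    (RealizableN0 n m ↔ Lf (X ^ i * P) m = 0) ∧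
      (Lf (X ^ i * P) m = 0 → BRealizable n m) :=
  Brealizable_step_general n hn m hB i hi P hP hLP
end

section
/- Let n ≥ 1, q := ⌊n/2⌋, i₀ := n − 2q, and m = (m_1,…,m_n) ∈ ℝ^n with m_0 := 1. Suppose L_P(m) ≥ 0 for all P ∈ 𝒫_n. Let l and p₀ be integers with 0 ≤ l < q and 0 ≤ p₀ ≤ 2(q−l), and let Q ∈ 𝒫_{i₀+2l} satisfy L_{x^p Q}(m) = 0 for all 0 ≤ p < p₀. Then (−1)^{p₀} · L_{x^{p₀} Q}(m) ≥ 0. -/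
open Polynomial

/-!
Put `N = 2(q - l)` and let `E = x(x - 1)⋯(x - N + 1)` be the falling factorial. For every large `c`
the polynomial `E(x - c) · Q` lies in `𝒫_n`: its roots are distinct naturals, and since `N` is even
the block `E(x - c)` is nonnegative at every integer. Hence `Φ(c) := L_{E(x - c) Q}(m) ≥ 0` for all
large `c`. Expanding `E(x - c)` in powers of `x` shows that `Φ` is a polynomial in `c` whose
coefficients are combinations of the moments `L_{x^p Q}(m)`. Those with `p < p₀` vanish, so `Φ` has
degree at most `N - p₀` and its coefficient of `c^(N - p₀)` is
`(-1)^(N - p₀) · binom(N, p₀) · L_{x^p₀ Q}(m)`. This coefficient is nonnegative because `Φ` is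
eventually nonnegative, and `(-1)^(N - p₀) = (-1)^p₀`.
-/

open Filter

lemma Lf_mul_eq_sum (m : ℕ → ℝ) {M : ℝ[X]} {N : ℕ} (hM : M.natDegree < N) (W : ℝ[X]) :
    Lf (M * W) m = ∑ p ∈ Finset.range N, M.coeff p * Lf (X ^ p * W) m := by
  let L : ℝ[X] →ₗ[ℝ] ℝ := lsum fun k => LinearMap.toSpanSingleton ℝ ℝ (m k)
  have hL : ∀ P, Lf P m = L P := fun P => by
    simp [L, Lf, lsum_apply, LinearMap.toSpanSingleton_apply, smul_eq_mul]
  conv_lhs => rw [M.as_sum_range_C_mul_X_pow' hM, Finset.sum_mul]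
  simp only [hL, map_sum, ← smul_eq_C_mul, smul_mul_assoc, map_smul, smul_eq_mul]

namespace Polynomial

section TaylorCoeffPairing

variable {R : Type*} [CommSemiring R]

noncomputable def taylorCoeffPairing (a : ℕ → R) (E : R[X]) : R[X] :=
  ∑ p ∈ Finset.range (E.natDegree + 1), C (a p) * hasseDeriv p E

theorem eval_taylorCoeffPairing (a : ℕ → R) (E : R[X]) (c : R) :
    (taylorCoeffPairing a E).eval c =
      ∑ p ∈ Finset.range (E.natDegree + 1), a p * (taylor c E).coeff p := by
  simp only [taylorCoeffPairing, eval_finsetSum, eval_mul, eval_C, taylor_coeff]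

variable {a : ℕ → R} {E : R[X]} {p₀ : ℕ}

theorem natDegree_taylorCoeffPairing_le (ha : ∀ p < p₀, a p = 0) :
    (taylorCoeffPairing a E).natDegree ≤ E.natDegree - p₀ := by
  refine natDegree_sum_le_of_forall_le _ _ fun p _ => ?_
  rcases lt_or_ge p p₀ with hp | hp
  · simp [ha p hp]
  · exact natDegree_C_mul_le _ _ |>.trans <| (natDegree_hasseDeriv_le E p).trans (by omega)

theorem coeff_taylorCoeffPairing (ha : ∀ p < p₀, a p = 0) (hp₀ : p₀ ≤ E.natDegree) :
    (taylorCoeffPairing a E).coeff (E.natDegree - p₀) =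
      a p₀ * E.natDegree.choose p₀ * E.leadingCoeff := by
  rw [taylorCoeffPairing, finsetSum_coeff, Finset.sum_eq_single p₀]
  · rw [coeff_C_mul, hasseDeriv_coeff, Nat.sub_add_cancel hp₀, leadingCoeff, mul_assoc]
  · intro p _ hne
    rcases lt_or_gt_of_ne hne with hp | hp
    · simp [ha p hp]
    · rw [coeff_C_mul, hasseDeriv_coeff, coeff_eq_zero_of_natDegree_lt (by omega), mul_zero,
        mul_zero]
  · intro h
    exact absurd (Finset.mem_range.2 (Nat.lt_succ_of_le hp₀)) h

end TaylorCoeffPairing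

theorem coeff_nonneg_of_eventually_nonneg {G : ℝ[X]} {d : ℕ} (hd : G.natDegree ≤ d)
    (hG : ∀ᶠ x : ℕ in atTop, 0 ≤ G.eval (x : ℝ)) : 0 ≤ G.coeff d := by
  rcases hd.lt_or_eq with hlt | rfl
  · rw [coeff_eq_zero_of_natDegree_lt hlt]
  rcases eq_or_ne G 0 with rfl | hG0
  · simp
  have hlim : Tendsto (fun x : ℕ => G.eval (x : ℝ) / (x : ℝ) ^ G.natDegree) atTop
      (nhds G.leadingCoeff) := by
    have := div_tendsto_atTop_leadingCoeff_div_of_degree_eq G (X ^ G.natDegree)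
      (by rw [degree_X_pow, degree_eq_natDegree hG0])
    simp only [eval_X_pow, leadingCoeff_X_pow, div_one] at this
    exact this.comp tendsto_natCast_atTop_atTop
  exact ge_of_tendsto hlim (hG.mono fun x hx => div_nonneg hx (by positivity))

theorem neg_one_pow_mul_coeff_nonneg_of_eventually_nonneg {G : ℝ[X]} {d : ℕ}
    (hd : G.natDegree ≤ d) (hG : ∀ᶠ x : ℕ in atTop, 0 ≤ G.eval (-x : ℝ)) :
    0 ≤ (-1) ^ d * G.coeff d := by
  have hdeg : (G.comp (C (-1) * X)).natDegree ≤ d := by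
    refine natDegree_comp_le.trans ?_
    simpa using hd
  have := coeff_nonneg_of_eventually_nonneg hdeg (by simpa using hG)
  rwa [comp_C_mul_X_coeff, mul_comm] at this

end Polynomial

theorem Lf_taylor_mul (m : ℕ → ℝ) (E W : ℝ[X]) (c : ℝ) :
    Lf (taylor c E * W) m = (taylorCoeffPairing (fun p => Lf (X ^ p * W) m) E).eval c := by
  rw [Lf_mul_eq_sum m (N := E.natDegree + 1) (by rw [natDegree_taylor]; omega),
    eval_taylorCoeffPairing]
  simp only [mul_comm]

theorem descPochhammer_int_eval_nonneg {N : ℕ} (hN : Even N) (y : ℤ) :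
    0 ≤ (descPochhammer ℤ N).eval y := by
  obtain ⟨M, rfl⟩ := hN
  induction M with
  | zero => simp
  | succ M ih =>
    rw [show M + 1 + (M + 1) = M + M + 1 + 1 by ring, descPochhammer_succ_right,
      descPochhammer_succ_right, mul_assoc, eval_mul]
    refine mul_nonneg ih ?_
    -- consecutive integers `t` and `t - 1` never have opposite strict signs
    have key : ∀ t : ℤ, 0 ≤ t * (t - 1) := fun t => by
      rcases le_or_gt t 0 with h | h <;> nlinarith
    simpa [sub_sub] using key (y - (M + M : ℕ))

theorem taylor_descPochhammer (N c : ℕ) :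
    taylor (-(c : ℝ)) (descPochhammer ℝ N) = ∏ a ∈ Finset.Ico c (c + N), (X - C (a : ℝ)) := by
  rw [Finset.prod_Ico_eq_prod_range, add_tsub_cancel_left]
  induction N with
  | zero => simp
  | succ N ih =>
    rw [descPochhammer_succ_right, taylor_mul, ih, Finset.prod_range_succ, map_sub, taylor_X,
      ← map_natCast C, taylor_C]
    simp only [map_neg, map_add, map_natCast, Nat.cast_add]
    ring

theorem polyP_prod_X_sub_C {U : Finset ℕ}
    (hU : ∀ x : ℕ, 0 ≤ (∏ a ∈ U, (X - C (a : ℝ))).eval (x : ℝ)) :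
    PolyP U.card (∏ a ∈ U, (X - C (a : ℝ))) := by
  have hmonic := monic_prod_of_monic U _ fun a _ => monic_X_sub_C (a : ℝ)
  refine ⟨hmonic, ?_, ⟨U, rfl, rfl⟩, hU⟩
  rw [natDegree_prod_of_monic U (fun a : ℕ => X - C (a : ℝ)) fun a _ => monic_X_sub_C (a : ℝ)]
  simp only [natDegree_X_sub_C, Finset.sum_const, smul_eq_mul, mul_one]

theorem polyP_taylor_descPochhammer_mul {S : Finset ℕ} {N c : ℕ} (hN : Even N)
    (hc : ∀ s ∈ S, s < c) (hS : ∀ x : ℕ, 0 ≤ (∏ s ∈ S, (X - C (s : ℝ))).eval (x : ℝ)) :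
    PolyP (N + S.card) (taylor (-(c : ℝ)) (descPochhammer ℝ N) * ∏ s ∈ S, (X - C (s : ℝ))) := by
  have hdisj : Disjoint (Finset.Ico c (c + N)) S :=
    Finset.disjoint_left.2 fun x hx hxS => by
      have := hc x hxS
      rw [Finset.mem_Ico] at hx
      omega
  have hcard : (Finset.Ico c (c + N) ∪ S).card = N + S.card := by
    rw [Finset.card_union_of_disjoint hdisj, Nat.card_Ico, add_tsub_cancel_left]
  rw [taylor_descPochhammer, ← Finset.prod_union hdisj, ← hcard]
  refine polyP_prod_X_sub_C fun x => ?_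
  rw [Finset.prod_union hdisj, eval_mul, ← taylor_descPochhammer, taylor_eval]
  refine mul_nonneg ?_ (hS x)
  have := descPochhammer_int_eval_nonneg hN (x - c)
  rw [← Int.cast_nonneg_iff (R := ℝ), descPochhammer_eval_cast] at this
  simpa [sub_eq_add_neg] using this

theorem sign_lemma_general (n : ℕ) (m : ℕ → ℝ)
    (h : ∀ P, PolyP n P → 0 ≤ Lf P m)
    (l p0 : ℕ) (hl : l < n / 2) (hp0 : p0 ≤ 2 * (n / 2 - l))
    (Q : Polynomial ℝ) (hQ : PolyP ((n - 2 * (n / 2)) + 2 * l) Q)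
    (hzero : ∀ p, p < p0 → Lf (X ^ p * Q) m = 0) :
    0 ≤ (-1 : ℝ) ^ p0 * Lf (X ^ p0 * Q) m := by
  obtain ⟨-, -, ⟨S, hS, rfl⟩, hQ⟩ := hQ
  set N := 2 * (n / 2 - l)
  set E := descPochhammer ℝ N
  set G := taylorCoeffPairing (fun p => Lf (X ^ p * ∏ s ∈ S, (X - C (s : ℝ))) m) E
  have hE : E.natDegree = N := descPochhammer_natDegree ℝ N
  have hG : ∀ᶠ c : ℕ in atTop, 0 ≤ G.eval (-c : ℝ) := by
    filter_upwards [(eventually_all_finset S).2 fun s _ => eventually_gt_atTop s] with c hc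
    rw [← Lf_taylor_mul]
    refine h _ ?_
    have hP := polyP_taylor_descPochhammer_mul (even_two_mul (n / 2 - l)) hc hQ
    rwa [hS, show N + (n - 2 * (n / 2) + 2 * l) = n by omega] at hP
  have hcoeff := neg_one_pow_mul_coeff_nonneg_of_eventually_nonneg
    (natDegree_taylorCoeffPairing_le hzero) hG
  rw [coeff_taylorCoeffPairing hzero (hE ▸ hp0), (monic_descPochhammer ℝ N).leadingCoeff, hE,
    neg_one_pow_eq_pow_mod_two, show (N - p0) % 2 = p0 % 2 by omega,
    ← neg_one_pow_eq_pow_mod_two, mul_one, ← mul_assoc] at hcoeff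
  exact nonneg_of_mul_nonneg_left hcoeff (by exact_mod_cast Nat.choose_pos hp0)

/-- Lemma 3.7: with `q = ⌊n/2⌋` and `i₀ = n - 2q`, if `L_P(m) ≥ 0` for all
`P ∈ 𝒫_n`, `0 ≤ l < q`, `0 ≤ p₀ ≤ 2(q-l)`, and `Q ∈ 𝒫_{i₀+2l}` satisfies
`L_{x^p Q}(m) = 0` for all `p < p₀`, then `(-1)^{p₀} L_{x^{p₀}Q}(m) ≥ 0`. -/
theorem sign_lemma (n : ℕ) (hn : 1 ≤ n) (m : ℕ → ℝ) (hm0 : m 0 = 1)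
    (h : ∀ P, PolyP n P → 0 ≤ Lf P m)
    (l p0 : ℕ) (hl : l < n / 2) (hp0 : p0 ≤ 2 * (n / 2 - l))
    (Q : Polynomial ℝ) (hQ : PolyP ((n - 2 * (n / 2)) + 2 * l) Q)
    (hzero : ∀ p, p < p0 → Lf (X ^ p * Q) m = 0) :
    0 ≤ (-1 : ℝ) ^ p0 * Lf (X ^ p0 * Q) m :=
  sign_lemma_general n m h l p0 hl hp0 Q hQ hzero
end
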